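/- arXiv:1810.06301 — 4 statements merged into one kernel-verified Lean document; each statement's English description precedes it below -/
import Mathlib

section
/- Algebraic form of Lemma 2.6: Let n ≥ 4, let W : Fin n → Fin n → Fin n → Fin n → ℝ be an algebraic Weyl tensor, and let A be a real symmetric n×n matrix with trace zero. Then | − Σ_{i,j,k,l} W_{ijkl} A_{ik} A_{jl} + (n/(n−2))·tr(A³) | ≤ √((n−2)/(2(n−1))) · ( ‖W‖² + (2n/(n−2))·‖A‖² )^{1/2} · ‖A‖², where tr(A³) = Σ_{i,j,k} A_{ij}A_{jk}A_{ki}, ‖W‖² = Σ_{i,j,k,l} W_{ijkl}², and ‖A‖² = Σ_{i,j} A_{ij}². -/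
/-!
With `S = A ∧ A = ½ A ⊙ A`, the left-hand side is `-½ (⟨W, S⟩ + q ⟨A, ric° S⟩)` for
`q = 2n/(n-2)`, because `ric° S = -(A²)°` when `tr A = 0`. A trace-free `W` is orthogonal to every
Kulkarni–Nomizu product `h ⊙ g`, so `⟨W, S⟩ = ⟨W, Weyl S⟩`, and Cauchy–Schwarz for the pairs
`(W, √q A)` and `(Weyl S, √q ric° S)` bounds the bracket by
`√(‖W‖² + q‖A‖²) · √(‖Weyl S‖² + q‖ric° S‖²)`. Splitting `S` into its Weyl and Ricci parts
evaluates the last factor exactly: `‖Weyl S‖² + q‖ric° S‖² = 2(n-2)/(n-1) · ‖A‖⁴`.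
-/

open Finset Matrix

lemma abs_add_mul_le_sqrt_mul_sqrt {p q x y x' y' c : ℝ} (hp : p ^ 2 ≤ x * y)
    (hq : q ^ 2 ≤ x' * y') (hx : 0 ≤ x) (hy : 0 ≤ y) (hx' : 0 ≤ x') (hy' : 0 ≤ y')
    (hc : 0 ≤ c) :
    |p + c * q| ≤ √(x + c * x') * √(y + c * y') := by
  have hpq : (p * q) ^ 2 ≤ (x * y') * (x' * y) := by
    rw [mul_pow]
    nlinarith [mul_le_mul hp hq (sq_nonneg q) (mul_nonneg hx hy)]
  have hcross : 2 * (p * q) ≤ x * y' + x' * y :=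
    le_of_sq_le_sq (by nlinarith [sq_nonneg (x * y' - x' * y)]) (by positivity)
  rw [← Real.sqrt_mul (by positivity)]
  apply Real.abs_le_sqrt
  nlinarith [mul_le_mul_of_nonneg_left hcross hc, mul_le_mul_of_nonneg_left hq (sq_nonneg c)]

namespace AlgebraicCurvature

abbrev Tensor (ι : Type*) := ι → ι → ι → ι → ℝ

variable {ι : Type*}

def AntisymmPairs (X : Tensor ι) : Prop :=
  (∀ i j k l, X i j k l = -X j i k l) ∧ ∀ i j k l, X i j k l = -X i j l k

lemma AntisymmPairs.sub {X Y : Tensor ι} (hX : AntisymmPairs X) (hY : AntisymmPairs Y) :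
    AntisymmPairs (X - Y) :=
  ⟨fun i j k l => by simp only [Pi.sub_apply, hX.1 i j k l, hY.1 i j k l]; ring,
    fun i j k l => by simp only [Pi.sub_apply, hX.2 i j k l, hY.2 i j k l]; ring⟩

lemma AntisymmPairs.smul {X : Tensor ι} (hX : AntisymmPairs X) (c : ℝ) :
    AntisymmPairs (c • X) :=
  ⟨fun i j k l => by simp [hX.1 i j k l], fun i j k l => by simp [hX.2 i j k l]⟩

/-- `A ∧ A = ½ A ⊙ A`. -/
def wedge (A : Matrix ι ι ℝ) : Tensor ι := fun i j k l => A i k * A j l - A i l * A j k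

lemma antisymmPairs_wedge (A : Matrix ι ι ℝ) : AntisymmPairs (wedge A) :=
  ⟨fun i j k l => by simp only [wedge]; ring, fun i j k l => by simp only [wedge]; ring⟩

/-- `h ⊙ g`, the Kulkarni–Nomizu product of `h` with the Euclidean metric `g = 1`. -/
def kulkarniNomizu [DecidableEq ι] (h : Matrix ι ι ℝ) : Tensor ι := fun i j k l =>
  h i k * (1 : Matrix ι ι ℝ) j l + h j l * (1 : Matrix ι ι ℝ) i k
    - h i l * (1 : Matrix ι ι ℝ) j k - h j k * (1 : Matrix ι ι ℝ) i l

lemma antisymmPairs_kulkarniNomizu [DecidableEq ι] (h : Matrix ι ι ℝ) :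
    AntisymmPairs (kulkarniNomizu h) :=
  ⟨fun i j k l => by simp only [kulkarniNomizu]; ring,
    fun i j k l => by simp only [kulkarniNomizu]; ring⟩

variable [Fintype ι]

def dot (X Y : Tensor ι) : ℝ := ∑ i, ∑ j, ∑ k, ∑ l, X i j k l * Y i j k l

def frobeniusInner (M N : Matrix ι ι ℝ) : ℝ := ∑ i, ∑ j, M i j * N i j

lemma dot_comm (X Y : Tensor ι) : dot X Y = dot Y X := by
  simp only [dot, mul_comm]

lemma dot_add_right (X Y Z : Tensor ι) : dot X (Y + Z) = dot X Y + dot X Z := by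
  simp only [dot, Pi.add_apply, mul_add, sum_add_distrib]

lemma dot_sub_right (X Y Z : Tensor ι) : dot X (Y - Z) = dot X Y - dot X Z := by
  simp only [dot, Pi.sub_apply, mul_sub, sum_sub_distrib]

lemma dot_smul_right (X Y : Tensor ι) (c : ℝ) : dot X (c • Y) = c * dot X Y := by
  simp only [dot, Pi.smul_apply, smul_eq_mul, mul_left_comm _ c, mul_sum]

lemma dot_self (X : Tensor ι) : dot X X = ∑ i, ∑ j, ∑ k, ∑ l, X i j k l ^ 2 := by
  simp only [dot, sq]

lemma dot_self_nonneg (X : Tensor ι) : 0 ≤ dot X X := by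
  rw [dot_self]; positivity

lemma dot_sq_le (X Y : Tensor ι) : dot X Y ^ 2 ≤ dot X X * dot Y Y := by
  simpa [dot, Fintype.sum_prod_type, sq] using
    sum_mul_sq_le_sq_mul_sq univ (fun p : ι × ι × ι × ι => X p.1 p.2.1 p.2.2.1 p.2.2.2)
      (fun p => Y p.1 p.2.1 p.2.2.1 p.2.2.2)

lemma dot_swap_first {X : Tensor ι} (hX : ∀ i j k l, X i j k l = -X j i k l) (Y : Tensor ι) :
    dot X (fun i j k l => Y j i k l) = -dot X Y := by
  rw [dot, sum_comm]
  simp only [dot, ← sum_neg_distrib]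
  exact sum_congr rfl fun i _ => sum_congr rfl fun j _ => sum_congr rfl fun k _ =>
    sum_congr rfl fun l _ => by rw [hX j i]; ring

lemma dot_swap_second {X : Tensor ι} (hX : ∀ i j k l, X i j k l = -X i j l k) (Y : Tensor ι) :
    dot X (fun i j k l => Y i j l k) = -dot X Y := by
  simp only [dot, ← sum_neg_distrib]
  refine sum_congr rfl fun i _ => sum_congr rfl fun j _ => ?_
  rw [sum_comm]
  exact sum_congr rfl fun k _ => sum_congr rfl fun l _ => by rw [hX i j l k]; ring

lemma dot_wedge_right {X : Tensor ι} (hX : ∀ i j k l, X i j k l = -X i j l k)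
    (A : Matrix ι ι ℝ) :
    dot X (wedge A) = 2 * ∑ i, ∑ j, ∑ k, ∑ l, X i j k l * A i k * A j l := by
  let P : Tensor ι := fun i j k l => A i k * A j l
  have hwedge : wedge A = P - fun i j k l => P i j l k := rfl
  rw [hwedge, dot_sub_right, dot_swap_second hX P, sub_neg_eq_add, ← two_mul]
  simp only [dot, P, mul_assoc]

lemma frobeniusInner_comm (M N : Matrix ι ι ℝ) : frobeniusInner M N = frobeniusInner N M := by
  simp only [frobeniusInner, mul_comm]

lemma frobeniusInner_sub_right (M N P : Matrix ι ι ℝ) :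
    frobeniusInner M (N - P) = frobeniusInner M N - frobeniusInner M P := by
  simp only [frobeniusInner, Matrix.sub_apply, mul_sub, sum_sub_distrib]

lemma frobeniusInner_smul_right (M N : Matrix ι ι ℝ) (c : ℝ) :
    frobeniusInner M (c • N) = c * frobeniusInner M N := by
  simp only [frobeniusInner, Matrix.smul_apply, smul_eq_mul, mul_left_comm _ c, mul_sum]

lemma frobeniusInner_neg_right (M N : Matrix ι ι ℝ) :
    frobeniusInner M (-N) = -frobeniusInner M N := by
  simp only [frobeniusInner, Matrix.neg_apply, mul_neg, sum_neg_distrib]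

lemma frobeniusInner_neg_left (M N : Matrix ι ι ℝ) :
    frobeniusInner (-M) N = -frobeniusInner M N := by
  simp only [frobeniusInner, Matrix.neg_apply, neg_mul, sum_neg_distrib]

lemma frobeniusInner_one_right [DecidableEq ι] (M : Matrix ι ι ℝ) :
    frobeniusInner M 1 = trace M := by
  simp [frobeniusInner, one_apply, trace]

lemma frobeniusInner_self (M : Matrix ι ι ℝ) : frobeniusInner M M = ∑ i, ∑ j, M i j ^ 2 := by
  simp only [frobeniusInner, sq]

lemma frobeniusInner_self_nonneg (M : Matrix ι ι ℝ) : 0 ≤ frobeniusInner M M := by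
  rw [frobeniusInner_self]; positivity

lemma frobeniusInner_sq_le (M N : Matrix ι ι ℝ) :
    frobeniusInner M N ^ 2 ≤ frobeniusInner M M * frobeniusInner N N := by
  simpa [frobeniusInner, Fintype.sum_prod_type, sq] using
    sum_mul_sq_le_sq_mul_sq univ (fun p : ι × ι => M p.1 p.2) (fun p => N p.1 p.2)

lemma trace_transpose_mul_eq_frobeniusInner (M N : Matrix ι ι ℝ) :
    trace (Mᵀ * N) = frobeniusInner M N := by
  simp only [trace, diag_apply, mul_apply, transpose_apply, frobeniusInner]
  exact sum_comm

lemma trace_mul_self_eq_frobeniusInner {A : Matrix ι ι ℝ} (hA : A.IsSymm) :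
    trace (A * A) = frobeniusInner A A := by
  rw [← trace_transpose_mul_eq_frobeniusInner, hA.eq]

lemma frobeniusInner_mul_self_eq_sum {A : Matrix ι ι ℝ} (hA : A.IsSymm) :
    frobeniusInner A (A * A) = ∑ i, ∑ j, ∑ k, A i j * A j k * A k i := by
  simp only [frobeniusInner, mul_apply, mul_sum]
  refine sum_congr rfl fun i _ => ?_
  rw [sum_comm]
  exact sum_congr rfl fun j _ => sum_congr rfl fun k _ => by rw [hA.apply i k]; ring

lemma dot_wedge_self (A : Matrix ι ι ℝ) :
    dot (wedge A) (wedge A)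
      = 2 * frobeniusInner A A ^ 2 - 2 * frobeniusInner (A * Aᵀ) (A * Aᵀ) := by
  have hrow : ∀ i j, ∑ k, ∑ l, wedge A i j k l * wedge A i j k l
      = (∑ k, A i k ^ 2) * (∑ l, A j l ^ 2) + (∑ k, A j k ^ 2) * (∑ l, A i l ^ 2)
        - 2 * ((A * Aᵀ) i j * (A * Aᵀ) i j) := by
    intro i j
    simp only [mul_apply, transpose_apply]
    rw [sum_mul_sum, sum_mul_sum, sum_mul_sum]
    simp only [mul_sum, ← sum_add_distrib, ← sum_sub_distrib]
    exact sum_congr rfl fun k _ => sum_congr rfl fun l _ => by simp only [wedge]; ring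
  simp only [dot, hrow, sum_add_distrib, sum_sub_distrib, ← sum_mul, ← mul_sum,
    frobeniusInner, sq]
  ring

def ricci (X : Tensor ι) : Matrix ι ι ℝ := fun i k => ∑ j, X i j k j

def scalar (X : Tensor ι) : ℝ := trace (ricci X)

lemma ricci_sub (X Y : Tensor ι) : ricci (X - Y) = ricci X - ricci Y := by
  ext i k; simp [ricci, sum_sub_distrib]

lemma ricci_smul (c : ℝ) (X : Tensor ι) : ricci (c • X) = c • ricci X := by
  ext i k; simp [ricci, mul_sum]

lemma ricci_eq_zero_of_traceFree {W : Tensor ι} (hW : AntisymmPairs W)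
    (hTraceFree : ∀ j l, ∑ i, W i j i l = 0) : ricci W = 0 := by
  ext i k
  change ∑ j, W i j k j = 0
  rw [← hTraceFree i k]
  exact sum_congr rfl fun j _ => by rw [hW.1, hW.2 j]; ring

lemma ricci_wedge (A : Matrix ι ι ℝ) : ricci (wedge A) = trace A • A - A * A := by
  ext i k
  simp only [ricci, wedge, sum_sub_distrib, ← mul_sum, Matrix.sub_apply, Matrix.smul_apply,
    smul_eq_mul, mul_apply, trace, diag_apply]
  ring

variable [DecidableEq ι]

lemma ricci_kulkarniNomizu (h : Matrix ι ι ℝ) :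
    ricci (kulkarniNomizu h) = ((Fintype.card ι : ℝ) - 2) • h + trace h • 1 := by
  ext i k
  have hright : ∑ j, h i j * (1 : Matrix ι ι ℝ) j k = h i k := by simp [one_apply]
  have hleft : ∑ j, h j k * (1 : Matrix ι ι ℝ) i j = h i k := by simp [one_apply]
  simp only [ricci, kulkarniNomizu, sum_add_distrib, sum_sub_distrib, one_apply_eq, mul_one,
    ← sum_mul, sum_const, card_univ, nsmul_eq_mul, hright, hleft, Matrix.add_apply,
    Matrix.smul_apply, smul_eq_mul, trace, diag_apply]
  ring

/-- Each of the four terms of `h ⊙ g` contributes `⟨ricci X, h⟩`. -/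
lemma dot_kulkarniNomizu {X : Tensor ι} (hX : AntisymmPairs X) (h : Matrix ι ι ℝ) :
    dot X (kulkarniNomizu h) = 4 * frobeniusInner (ricci X) h := by
  let P : Tensor ι := fun i j k l => h i k * (1 : Matrix ι ι ℝ) j l
  have hP : dot X P = frobeniusInner (ricci X) h := by
    simp only [dot, P, frobeniusInner, ricci, one_apply, mul_ite, mul_one, mul_zero, sum_ite_eq,
      mem_univ, if_true, sum_mul]
    exact sum_congr rfl fun i _ => sum_comm
  have hkn : kulkarniNomizu h = P + (fun i j k l => P j i l k) - (fun i j k l => P i j l k)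
      - (fun i j k l => P j i k l) := rfl
  have hswap := (dot_swap_first hX.1 fun i j k l => P i j l k).trans
    (congrArg Neg.neg (dot_swap_second hX.2 P))
  rw [hkn, dot_sub_right, dot_sub_right, dot_add_right, hswap, dot_swap_first hX.1 P,
    dot_swap_second hX.2 P, hP]
  ring

noncomputable def tracelessRicci (X : Tensor ι) : Matrix ι ι ℝ :=
  ricci X - (scalar X / Fintype.card ι) • 1

/-- The coefficients come from the decomposition, with `n = card ι`,
`X = weylPart X + tracelessRicci X ⊙ g / (n - 2) + scalar X • g ⊙ g / (2n(n - 1))`. -/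
noncomputable def weylPart (X : Tensor ι) : Tensor ι :=
  X - (1 / ((Fintype.card ι : ℝ) - 2)) • kulkarniNomizu (tracelessRicci X)
    - (scalar X / (2 * Fintype.card ι * ((Fintype.card ι : ℝ) - 1))) • kulkarniNomizu 1

lemma antisymmPairs_weylPart {X : Tensor ι} (hX : AntisymmPairs X) :
    AntisymmPairs (weylPart X) :=
  (hX.sub ((antisymmPairs_kulkarniNomizu _).smul _)).sub ((antisymmPairs_kulkarniNomizu _).smul _)

lemma dot_weylPart_of_ricci_eq_zero {W : Tensor ι} (hW : AntisymmPairs W) (hric : ricci W = 0)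
    (X : Tensor ι) : dot W (weylPart X) = dot W X := by
  simp only [weylPart, dot_sub_right, dot_smul_right, dot_kulkarniNomizu hW, hric,
    frobeniusInner, Matrix.zero_apply, zero_mul, sum_const_zero, mul_zero, sub_zero]

lemma frobeniusInner_tracelessRicci_wedge {A : Matrix ι ι ℝ} (htr : trace A = 0) :
    frobeniusInner A (tracelessRicci (wedge A)) = -frobeniusInner A (A * A) := by
  rw [tracelessRicci, frobeniusInner_sub_right, frobeniusInner_smul_right,
    frobeniusInner_one_right, htr, ricci_wedge, htr, zero_smul, zero_sub,
    frobeniusInner_neg_right, mul_zero, sub_zero]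

section Nonempty

variable [Nonempty ι]

lemma trace_tracelessRicci (X : Tensor ι) : trace (tracelessRicci X) = 0 := by
  have : (Fintype.card ι : ℝ) ≠ 0 := by positivity
  rw [tracelessRicci, trace_sub, trace_smul, trace_one, smul_eq_mul, div_mul_cancel₀ _ this,
    scalar, sub_self]

lemma frobeniusInner_tracelessRicci_ricci (X : Tensor ι) :
    frobeniusInner (tracelessRicci X) (ricci X)
      = frobeniusInner (tracelessRicci X) (tracelessRicci X) := by
  conv_rhs => arg 2; rw [tracelessRicci]
  rw [frobeniusInner_sub_right, frobeniusInner_smul_right, frobeniusInner_one_right,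
    trace_tracelessRicci, mul_zero, sub_zero]

lemma frobeniusInner_tracelessRicci_self (X : Tensor ι) :
    frobeniusInner (tracelessRicci X) (tracelessRicci X)
      = frobeniusInner (ricci X) (ricci X) - scalar X ^ 2 / Fintype.card ι := by
  calc frobeniusInner (tracelessRicci X) (tracelessRicci X)
      = frobeniusInner (tracelessRicci X) (ricci X) :=
        (frobeniusInner_tracelessRicci_ricci X).symm
    _ = frobeniusInner (ricci X) (ricci X) - scalar X ^ 2 / Fintype.card ι := by
        rw [frobeniusInner_comm, tracelessRicci, frobeniusInner_sub_right,
          frobeniusInner_smul_right, frobeniusInner_one_right, ← scalar]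
        ring

end Nonempty

variable (hn : 2 < Fintype.card ι)
include hn

lemma ricci_weylPart (X : Tensor ι) : ricci (weylPart X) = 0 := by
  have : Nonempty ι := Fintype.card_pos_iff.mp (by omega)
  have hn' : (2 : ℝ) < Fintype.card ι := by exact_mod_cast hn
  have h0 : (Fintype.card ι : ℝ) ≠ 0 := by positivity
  have h1 : (Fintype.card ι : ℝ) - 1 ≠ 0 := by linarith
  have h2 : (Fintype.card ι : ℝ) - 2 ≠ 0 := by linarith
  rw [weylPart, ricci_sub, ricci_sub, ricci_smul, ricci_smul, ricci_kulkarniNomizu,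
    ricci_kulkarniNomizu, trace_tracelessRicci, trace_one, tracelessRicci]
  ext i k
  simp only [Matrix.sub_apply, Matrix.add_apply, Matrix.smul_apply, smul_eq_mul, zero_smul,
    add_zero, Matrix.zero_apply]
  field_simp
  ring

lemma dot_weylPart_self {X : Tensor ι} (hX : AntisymmPairs X) :
    dot (weylPart X) (weylPart X)
      = dot X X - 4 / ((Fintype.card ι : ℝ) - 2)
          * frobeniusInner (tracelessRicci X) (tracelessRicci X)
        - 2 * scalar X ^ 2 / (Fintype.card ι * ((Fintype.card ι : ℝ) - 1)) := by
  have : Nonempty ι := Fintype.card_pos_iff.mp (by omega)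
  have hn' : (2 : ℝ) < Fintype.card ι := by exact_mod_cast hn
  have h0 : (Fintype.card ι : ℝ) ≠ 0 := by positivity
  have h1 : (Fintype.card ι : ℝ) - 1 ≠ 0 := by linarith
  have h2 : (Fintype.card ι : ℝ) - 2 ≠ 0 := by linarith
  calc dot (weylPart X) (weylPart X)
      = dot X (weylPart X) := by
        rw [dot_weylPart_of_ricci_eq_zero (antisymmPairs_weylPart hX) (ricci_weylPart hn X),
          dot_comm]
    _ = _ := by
        rw [weylPart, dot_sub_right, dot_sub_right, dot_smul_right, dot_smul_right,
          dot_kulkarniNomizu hX, dot_kulkarniNomizu hX, frobeniusInner_one_right, ← scalar,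
          frobeniusInner_comm, frobeniusInner_tracelessRicci_ricci]
        field_simp
        ring

lemma dot_weylPart_wedge_add {A : Matrix ι ι ℝ} (hA : A.IsSymm) (htr : trace A = 0) :
    dot (weylPart (wedge A)) (weylPart (wedge A))
      + 2 * Fintype.card ι / ((Fintype.card ι : ℝ) - 2)
        * frobeniusInner (tracelessRicci (wedge A)) (tracelessRicci (wedge A))
      = 2 * ((Fintype.card ι : ℝ) - 2) / ((Fintype.card ι : ℝ) - 1) * frobeniusInner A A ^ 2 := by
  have : Nonempty ι := Fintype.card_pos_iff.mp (by omega)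
  have hn' : (2 : ℝ) < Fintype.card ι := by exact_mod_cast hn
  have h1 : (Fintype.card ι : ℝ) - 1 ≠ 0 := by linarith
  have h2 : (Fintype.card ι : ℝ) - 2 ≠ 0 := by linarith
  rw [dot_weylPart_self hn (antisymmPairs_wedge A), frobeniusInner_tracelessRicci_self,
    dot_wedge_self, scalar, ricci_wedge, htr, zero_smul, zero_sub, trace_neg,
    trace_mul_self_eq_frobeniusInner hA, hA.eq, frobeniusInner_neg_left,
    frobeniusInner_neg_right, neg_neg]
  field_simp
  ring

theorem abs_dot_wedge_le {W : Tensor ι} (hW : AntisymmPairs W) (hric : ricci W = 0)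
    {A : Matrix ι ι ℝ} (hA : A.IsSymm) (htr : trace A = 0) :
    |-(dot W (wedge A) / 2)
        + (Fintype.card ι : ℝ) / ((Fintype.card ι : ℝ) - 2) * frobeniusInner A (A * A)|
      ≤ √(((Fintype.card ι : ℝ) - 2) / (2 * ((Fintype.card ι : ℝ) - 1)))
        * √(dot W W + 2 * Fintype.card ι / ((Fintype.card ι : ℝ) - 2) * frobeniusInner A A)
        * frobeniusInner A A := by
  have hn' : (2 : ℝ) < Fintype.card ι := by exact_mod_cast hn
  have hcs := abs_add_mul_le_sqrt_mul_sqrt (dot_sq_le W (weylPart (wedge A)))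
    (frobeniusInner_sq_le A (tracelessRicci (wedge A))) (dot_self_nonneg _) (dot_self_nonneg _)
    (frobeniusInner_self_nonneg _) (frobeniusInner_self_nonneg _)
    (c := 2 * Fintype.card ι / ((Fintype.card ι : ℝ) - 2))
    (div_nonneg (by positivity) (by linarith))
  rw [dot_weylPart_wedge_add hn hA htr, dot_weylPart_of_ricci_eq_zero hW hric,
    frobeniusInner_tracelessRicci_wedge htr] at hcs
  have ha := frobeniusInner_self_nonneg A
  generalize (Fintype.card ι : ℝ) = n at *
  generalize frobeniusInner A A = a at *
  have hhalf : √(2 * (n - 2) / (n - 1)) / 2 = √((n - 2) / (2 * (n - 1))) := by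
    rw [show (n - 2) / (2 * (n - 1)) = 2 * (n - 2) / (n - 1) / 2 ^ 2 by field_simp,
      Real.sqrt_div' _ (by positivity : (0:ℝ) ≤ 2 ^ 2), Real.sqrt_sq zero_le_two]
  have hc : 0 ≤ 2 * (n - 2) / (n - 1) := div_nonneg (by linarith) (by linarith)
  calc |-(dot W (wedge A) / 2) + n / (n - 2) * frobeniusInner A (A * A)|
      = |dot W (wedge A) + 2 * n / (n - 2) * -frobeniusInner A (A * A)| / 2 := by
        rw [← abs_two, ← abs_div, ← abs_neg]
        congr 1
        field_simp
        ring
    _ ≤ √(dot W W + 2 * n / (n - 2) * a) * √(2 * (n - 2) / (n - 1) * a ^ 2) / 2 := by gcongr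
    _ = √((n - 2) / (2 * (n - 1))) * √(dot W W + 2 * n / (n - 2) * a) * a := by
        rw [Real.sqrt_mul hc, Real.sqrt_sq ha, ← hhalf]
        ring

end AlgebraicCurvature

open AlgebraicCurvature

theorem stmt_0_general (n : ℕ) (hn : 4 ≤ n)
    (W : Fin n → Fin n → Fin n → Fin n → ℝ)
    (hW1 : ∀ i j k l, W i j k l = - W j i k l)
    (hW2 : ∀ i j k l, W i j k l = - W i j l k)
    (hTraceFree : ∀ j l, ∑ i, W i j i l = 0)
    (A : Fin n → Fin n → ℝ)
    (hAsymm : ∀ i j, A i j = A j i)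
    (hAtr : ∑ i, A i i = 0) :
    |(- ∑ i, ∑ j, ∑ k, ∑ l, W i j k l * A i k * A j l)
      + ((n : ℝ) / ((n : ℝ) - 2)) * ∑ i, ∑ j, ∑ k, A i j * A j k * A k i|
    ≤ Real.sqrt (((n : ℝ) - 2) / (2 * ((n : ℝ) - 1)))
      * Real.sqrt ((∑ i, ∑ j, ∑ k, ∑ l, (W i j k l) ^ 2)
          + (2 * (n : ℝ) / ((n : ℝ) - 2)) * ∑ i, ∑ j, (A i j) ^ 2)
      * ∑ i, ∑ j, (A i j) ^ 2 := by
  have hW : AntisymmPairs W := ⟨hW1, hW2⟩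
  have hA : Matrix.IsSymm A := Matrix.IsSymm.ext fun i j => hAsymm j i
  have key := abs_dot_wedge_le (by simp only [Fintype.card_fin]; omega) hW
    (ricci_eq_zero_of_traceFree hW hTraceFree) hA hAtr
  rw [dot_wedge_right hW2 A, frobeniusInner_mul_self_eq_sum hA, dot_self W,
    frobeniusInner_self A, Fintype.card_fin, mul_div_cancel_left₀ _ two_ne_zero] at key
  exact key

/-- Algebraic form of Lemma 2.6. -/
theorem stmt_0 (n : ℕ) (hn : 4 ≤ n)
    (W : Fin n → Fin n → Fin n → Fin n → ℝ)
    (hW1 : ∀ i j k l, W i j k l = - W j i k l)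
    (hW2 : ∀ i j k l, W i j k l = - W i j l k)
    (hW3 : ∀ i j k l, W i j k l = W k l i j)
    (hBianchi : ∀ i j k l, W i j k l + W i k l j + W i l j k = 0)
    (hTraceFree : ∀ j l, ∑ i, W i j i l = 0)
    (A : Fin n → Fin n → ℝ)
    (hAsymm : ∀ i j, A i j = A j i)
    (hAtr : ∑ i, A i i = 0) :
    |(- ∑ i, ∑ j, ∑ k, ∑ l, W i j k l * A i k * A j l)
      + ((n : ℝ) / ((n : ℝ) - 2)) * ∑ i, ∑ j, ∑ k, A i j * A j k * A k i|
    ≤ Real.sqrt (((n : ℝ) - 2) / (2 * ((n : ℝ) - 1)))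
      * Real.sqrt ((∑ i, ∑ j, ∑ k, ∑ l, (W i j k l) ^ 2)
          + (2 * (n : ℝ) / ((n : ℝ) - 2)) * ∑ i, ∑ j, (A i j) ^ 2)
      * ∑ i, ∑ j, (A i j) ^ 2 :=
  stmt_0_general n hn W hW1 hW2 hTraceFree A hAsymm hAtr
end

section
/- Equation (2.10): Let n ≥ 4 and let A be a real symmetric n×n matrix with trace zero. With V'_{ijkl} = −(2/(n−2))·(A² ∧○ g)_{ijkl} + (2/(n(n−2)))·‖A‖²·(g ∧○ g)_{ijkl}, U'_{ijkl} = −(1/(n(n−1)))·‖A‖²·(g ∧○ g)_{ijkl}, and T = A ∧○ A − V' − U', the identity ‖T‖² + (n/2)·‖V'‖² = (8(n−2)/(n−1))·‖A‖⁴ holds. -/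
/-- Kulkarni–Nomizu product of two n×n matrices. -/
def KN {n : ℕ} (B C : Fin n → Fin n → ℝ) (i j k l : Fin n) : ℝ :=
  B i k * C j l - B i l * C j k + B j l * C i k - B j k * C i l

/-- The identity matrix viewed as the metric g. -/
def gmat (n : ℕ) : Fin n → Fin n → ℝ := fun i j => if i = j then 1 else 0

lemma s4c {n : ℕ} (f g : Fin n → Fin n → Fin n → Fin n → ℝ)
    (h : ∀ a b c d, f a b c d = g a b c d) :
    ∑ a, ∑ b, ∑ c, ∑ d, f a b c d = ∑ a, ∑ b, ∑ c, ∑ d, g a b c d :=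
  Finset.sum_congr rfl fun a _ => Finset.sum_congr rfl fun b _ =>
    Finset.sum_congr rfl fun c _ => Finset.sum_congr rfl fun d _ => h a b c d

theorem L1aux (n : ℕ) (A : Fin n → Fin n → ℝ) :
  ∑ i, ∑ j, ∑ k, ∑ l, KN A A i j k l ^ 2
  = 8 * (∑ i, ∑ j, A i j ^ 2)^2 - 8 * ∑ i, ∑ j, (∑ p, A i p * A j p)^2 := by
  simp only [KN]
  ring_nf
  simp only [Finset.sum_add_distrib]
  have e1 : (∑ x : Fin n, ∑ x1 : Fin n, ∑ x2 : Fin n, ∑ x3 : Fin n,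
      -(A x x2 * A x1 x3 * A x x3 * A x1 x2 * 8))
      = -(8 * ∑ i, ∑ j, (∑ p, A i p * A j p)^2) := by
    simp only [Finset.sum_neg_distrib]
    rw [neg_inj]
    symm
    rw [Finset.mul_sum]
    refine Finset.sum_congr rfl fun i _ => ?_
    rw [Finset.mul_sum]
    refine Finset.sum_congr rfl fun j _ => ?_
    rw [sq, Finset.sum_mul_sum, Finset.mul_sum]
    refine Finset.sum_congr rfl fun p _ => ?_
    rw [Finset.mul_sum]
    refine Finset.sum_congr rfl fun q _ => ?_
    ring
  have e2 : (∑ x : Fin n, ∑ x1 : Fin n, ∑ x2 : Fin n, ∑ x3 : Fin n,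
      A x x2 ^ 2 * A x1 x3 ^ 2 * 4) = 4 * (∑ i, ∑ j, A i j ^ 2)^2 := by
    symm
    rw [sq, Finset.sum_mul_sum, Finset.mul_sum]
    refine Finset.sum_congr rfl fun i _ => ?_
    rw [Finset.mul_sum]
    refine Finset.sum_congr rfl fun k _ => ?_
    rw [Finset.sum_mul_sum, Finset.mul_sum]
    refine Finset.sum_congr rfl fun j _ => ?_
    rw [Finset.mul_sum]
    refine Finset.sum_congr rfl fun l _ => ?_
    ring
  have e3 : (∑ x : Fin n, ∑ x1 : Fin n, ∑ x2 : Fin n, ∑ x3 : Fin n,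
      A x x3 ^ 2 * A x1 x2 ^ 2 * 4)
      = ∑ x : Fin n, ∑ x1 : Fin n, ∑ x2 : Fin n, ∑ x3 : Fin n,
      A x x2 ^ 2 * A x1 x3 ^ 2 * 4 :=
    Finset.sum_congr rfl fun _ _ => Finset.sum_congr rfl fun _ _ => Finset.sum_comm
  rw [e1, e3, e2]
  ring

theorem G1aux (n : ℕ) (B C : Fin n → Fin n → ℝ) :
  ∑ i, ∑ j, ∑ k, ∑ l, KN B (gmat n) i j k l * KN C (gmat n) i j k l
  = (4*(n:ℝ)-8) * (∑ i, ∑ k, B i k * C i k) + 4 * (∑ i, B i i) * (∑ j, C j j) := by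
  simp only [KN, gmat]
  simp [mul_ite, ite_mul, mul_zero, zero_mul, mul_one, one_mul, sub_mul, mul_sub, add_mul, mul_add,
    Finset.sum_add_distrib, Finset.sum_sub_distrib, Finset.sum_ite_eq, Finset.sum_ite_eq',
    Finset.mul_sum, Finset.sum_mul]
  have e1 : ∑ x : Fin n, ∑ x_1 : Fin n, B x_1 x * C x_1 x = ∑ x, ∑ x_1, B x x_1 * C x x_1 :=
    Finset.sum_comm
  have e2 : ∑ x : Fin n, ∑ x_1 : Fin n, B x_1 x_1 * C x x = ∑ x, ∑ x_1, B x x * C x_1 x_1 :=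
    Finset.sum_comm
  rw [e1, e2]
  simp only [← Finset.mul_sum, ← Finset.sum_mul]
  ring

theorem G2aux (n : ℕ) (A B : Fin n → Fin n → ℝ) :
  ∑ i, ∑ j, ∑ k, ∑ l, KN A A i j k l * KN B (gmat n) i j k l
  = 8 * (∑ x : Fin n, ∑ x1 : Fin n, ∑ x2 : Fin n, A x x * A x1 x2 * B x1 x2)
    - 8 * (∑ x : Fin n, ∑ x1 : Fin n, ∑ x2 : Fin n, A x x1 * A x1 x2 * B x x2) := by
  simp only [KN, gmat]
  simp [mul_ite, ite_mul, mul_zero, zero_mul, mul_one, one_mul, sub_mul, mul_sub, add_mul, mul_add,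
    Finset.sum_add_distrib, Finset.sum_sub_distrib, Finset.sum_ite_eq, Finset.sum_ite_eq',
    Finset.mul_sum, Finset.sum_mul]
  have c1 : (∑ x : Fin n, ∑ x1 : Fin n, ∑ x2 : Fin n, A x x2 * A x1 x1 * B x x2)
      = ∑ x : Fin n, ∑ x1 : Fin n, ∑ x2 : Fin n, A x x * A x1 x2 * B x1 x2 := by
    rw [Finset.sum_comm]
    exact Finset.sum_congr rfl fun _ _ => Finset.sum_congr rfl fun _ _ =>
      Finset.sum_congr rfl fun _ _ => by ring
  have c2 : (∑ x : Fin n, ∑ x1 : Fin n, ∑ x2 : Fin n, A x1 x1 * A x x2 * B x x2)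
      = ∑ x : Fin n, ∑ x1 : Fin n, ∑ x2 : Fin n, A x x * A x1 x2 * B x1 x2 := by
    rw [Finset.sum_comm]
  have c3 : (∑ x : Fin n, ∑ x1 : Fin n, ∑ x2 : Fin n, A x1 x2 * A x x1 * B x x2)
      = ∑ x : Fin n, ∑ x1 : Fin n, ∑ x2 : Fin n, A x x1 * A x1 x2 * B x x2 :=
    Finset.sum_congr rfl fun _ _ => Finset.sum_congr rfl fun _ _ =>
      Finset.sum_congr rfl fun _ _ => by ring
  have c4 : (∑ x : Fin n, ∑ x1 : Fin n, ∑ x2 : Fin n, A x1 x2 * A x x * B x1 x2)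
      = ∑ x : Fin n, ∑ x1 : Fin n, ∑ x2 : Fin n, A x x * A x1 x2 * B x1 x2 :=
    Finset.sum_congr rfl fun _ _ => Finset.sum_congr rfl fun _ _ =>
      Finset.sum_congr rfl fun _ _ => by ring
  have c5 : (∑ x : Fin n, ∑ x1 : Fin n, ∑ x2 : Fin n, A x x2 * A x1 x * B x1 x2)
      = ∑ x : Fin n, ∑ x1 : Fin n, ∑ x2 : Fin n, A x x1 * A x1 x2 * B x x2 := by
    rw [Finset.sum_comm]
    exact Finset.sum_congr rfl fun _ _ => Finset.sum_congr rfl fun _ _ =>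
      Finset.sum_congr rfl fun _ _ => by ring
  have c6 : (∑ x : Fin n, ∑ x1 : Fin n, ∑ x2 : Fin n, A x1 x * A x x2 * B x1 x2)
      = ∑ x : Fin n, ∑ x1 : Fin n, ∑ x2 : Fin n, A x x1 * A x1 x2 * B x x2 := by
    rw [Finset.sum_comm]
  have r1 : (∑ x : Fin n, ∑ x1 : Fin n, ∑ i : Fin n, 8 * (A x x * A x1 i * B x1 i))
      = 8 * ∑ x : Fin n, ∑ x1 : Fin n, ∑ x2 : Fin n, A x x * A x1 x2 * B x1 x2 := by
    simp only [Finset.mul_sum]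
  have r2 : (∑ x : Fin n, ∑ x1 : Fin n, ∑ i : Fin n, 8 * (A x x1 * A x1 i * B x i))
      = 8 * ∑ x : Fin n, ∑ x1 : Fin n, ∑ x2 : Fin n, A x x1 * A x1 x2 * B x x2 := by
    simp only [Finset.mul_sum]
  rw [c1, c2, c3, c4, c5, c6, r1, r2]
  ring

/-- Equation (2.10): ‖T‖² + (n/2)‖V'‖² = (8(n−2)/(n−1))‖A‖⁴. -/
theorem stmt_4 (n : ℕ) (hn : 4 ≤ n)
    (A : Fin n → Fin n → ℝ)
    (hAsymm : ∀ i j, A i j = A j i)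
    (hAtr : ∑ i, A i i = 0)
    (Asq : Fin n → Fin n → ℝ) (hAsq : ∀ i k, Asq i k = ∑ p, A i p * A k p)
    (V' : Fin n → Fin n → Fin n → Fin n → ℝ)
    (hV' : ∀ i j k l, V' i j k l =
      -(2 / ((n : ℝ) - 2)) * KN Asq (gmat n) i j k l
        + (2 / ((n : ℝ) * ((n : ℝ) - 2))) * (∑ a, ∑ b, (A a b) ^ 2)
            * KN (gmat n) (gmat n) i j k l)
    (U' : Fin n → Fin n → Fin n → Fin n → ℝ)
    (hU' : ∀ i j k l, U' i j k l =
      -(1 / ((n : ℝ) * ((n : ℝ) - 1))) * (∑ a, ∑ b, (A a b) ^ 2)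
        * KN (gmat n) (gmat n) i j k l)
    (T : Fin n → Fin n → Fin n → Fin n → ℝ)
    (hT : ∀ i j k l, T i j k l = KN A A i j k l - V' i j k l - U' i j k l) :
    (∑ i, ∑ j, ∑ k, ∑ l, (T i j k l) ^ 2)
      + ((n : ℝ) / 2) * ∑ i, ∑ j, ∑ k, ∑ l, (V' i j k l) ^ 2
    = (8 * ((n : ℝ) - 2) / ((n : ℝ) - 1)) * (∑ i, ∑ j, (A i j) ^ 2) ^ 2 := by
  have hN4 : (4:ℝ) ≤ (n:ℝ) := by exact_mod_cast hn
  have hN0 : (n:ℝ) ≠ 0 := by linarith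
  have hN1 : (n:ℝ) - 1 ≠ 0 := by linarith
  have hN2 : (n:ℝ) - 2 ≠ 0 := by linarith
  set s : ℝ := ∑ a, ∑ b, (A a b) ^ 2 with hs
  -- key pointwise identity
  have key : ∀ i j k l, T i j k l ^ 2 + ((n:ℝ)/2) * V' i j k l ^ 2 =
      KN A A i j k l ^ 2
      + ((-(2 / ((n : ℝ) - 2)))^2 * (1 + (n:ℝ)/2))
          * (KN Asq (gmat n) i j k l * KN Asq (gmat n) i j k l)
      + (((2 / ((n : ℝ) * ((n : ℝ) - 2))) * s + -(1 / ((n : ℝ) * ((n : ℝ) - 1))) * s)^2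
          + ((n:ℝ)/2) * ((2 / ((n : ℝ) * ((n : ℝ) - 2))) * s)^2)
          * (KN (gmat n) (gmat n) i j k l * KN (gmat n) (gmat n) i j k l)
      + (-2 * (-(2 / ((n : ℝ) - 2))))
          * (KN A A i j k l * KN Asq (gmat n) i j k l)
      + (-2 * ((2 / ((n : ℝ) * ((n : ℝ) - 2))) * s + -(1 / ((n : ℝ) * ((n : ℝ) - 1))) * s))
          * (KN A A i j k l * KN (gmat n) (gmat n) i j k l)
      + (2 * (-(2 / ((n : ℝ) - 2)))
            * ((2 / ((n : ℝ) * ((n : ℝ) - 2))) * s + -(1 / ((n : ℝ) * ((n : ℝ) - 1))) * s)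
          + (n:ℝ) * (-(2 / ((n : ℝ) - 2))) * ((2 / ((n : ℝ) * ((n : ℝ) - 2))) * s))
          * (KN Asq (gmat n) i j k l * KN (gmat n) (gmat n) i j k l) := by
    intro i j k l
    rw [hT, hV', hU']
    ring
  simp only [Finset.mul_sum]
  simp only [← Finset.sum_add_distrib]
  rw [s4c _ _ key]
  simp only [Finset.sum_add_distrib]
  simp only [← Finset.mul_sum]
  rw [L1aux n A, G1aux n Asq Asq, G1aux n (gmat n) (gmat n), G2aux n A Asq,
    G2aux n A (gmat n), G1aux n Asq (gmat n)]
  -- bridge identities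
  have htrAsq : (∑ i, Asq i i) = s := by
    rw [hs]
    exact Finset.sum_congr rfl fun i _ => by
      rw [hAsq]
      exact Finset.sum_congr rfl fun p _ => (sq (A i p)).symm
  have hgg : (∑ i : Fin n, ∑ k : Fin n, gmat n i k * gmat n i k) = (n:ℝ) := by simp [gmat]
  have htrg : (∑ i : Fin n, gmat n i i) = (n:ℝ) := by simp [gmat]
  have hAsqg : (∑ i, ∑ k, Asq i k * gmat n i k) = s := by
    rw [← htrAsq]; simp [gmat]
  have hQ : (∑ i, ∑ j, (∑ p, A i p * A j p)^2) = ∑ i, ∑ j, Asq i j * Asq i j := by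
    exact Finset.sum_congr rfl fun i _ => Finset.sum_congr rfl fun j _ => by
      rw [hAsq, sq]
  have hz : ∀ B : Fin n → Fin n → ℝ,
      (∑ x : Fin n, ∑ x1 : Fin n, ∑ x2 : Fin n, A x x * A x1 x2 * B x1 x2) = 0 := by
    intro B
    have : (∑ x : Fin n, ∑ x1 : Fin n, ∑ x2 : Fin n, A x x * A x1 x2 * B x1 x2)
        = (∑ x, A x x) * (∑ x1 : Fin n, ∑ x2 : Fin n, A x1 x2 * B x1 x2) := by
      rw [Finset.sum_mul]
      refine Finset.sum_congr rfl fun x _ => ?_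
      rw [Finset.mul_sum]
      refine Finset.sum_congr rfl fun x1 _ => ?_
      rw [Finset.mul_sum]
      exact Finset.sum_congr rfl fun x2 _ => by ring
    rw [this, hAtr, zero_mul]
  have hT2g : (∑ x : Fin n, ∑ x1 : Fin n, ∑ x2 : Fin n, A x x1 * A x1 x2 * gmat n x x2)
      = s := by
    rw [hs]
    simp [gmat, mul_ite, mul_one, mul_zero, Finset.sum_ite_eq, Finset.sum_ite_eq']
    exact Finset.sum_congr rfl fun x _ => Finset.sum_congr rfl fun x1 _ => by
      rw [hAsymm x1 x, sq]
  have hT2Asq : (∑ x : Fin n, ∑ x1 : Fin n, ∑ x2 : Fin n, A x x1 * A x1 x2 * Asq x x2)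
      = ∑ i, ∑ j, Asq i j * Asq i j := by
    refine Finset.sum_congr rfl fun x _ => ?_
    rw [Finset.sum_comm]
    refine Finset.sum_congr rfl fun x2 _ => ?_
    rw [← Finset.sum_mul]
    have : (∑ x1, A x x1 * A x1 x2) = Asq x x2 := by
      rw [hAsq]
      exact Finset.sum_congr rfl fun p _ => by rw [hAsymm p x2]
    rw [this]
  rw [htrAsq, hgg, htrg, hAsqg, hQ, hz Asq, hz (gmat n), hT2g, hT2Asq]
  set Q : ℝ := ∑ i, ∑ j, Asq i j * Asq i j with hQdef
  field_simp
  ring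
end

section
/- Cauchy–Schwarz estimate in the proof of Lemma 2.6: Let n ≥ 4, let W : Fin n → Fin n → Fin n → Fin n → ℝ be an algebraic Weyl tensor, and let A be a real symmetric n×n matrix with trace zero. Then ( Σ_{i,j,k,l} ( W_{ijkl} + (n/(2(n−2)))·(A ∧○ g)_{ijkl} ) · (A ∧○ A)_{ijkl} )² ≤ (8(n−2)/(n−1))·‖A‖⁴·( ‖W‖² + (2n/(n−2))·‖A‖² ). -/
open Finset

namespace Stmt9
variable {n : ℕ}

def ip (X Y : Fin n → Fin n → ℝ) : ℝ := ∑ i, ∑ j, X i j * Y i j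

def tr4 (P Q R S : Fin n → Fin n → ℝ) : ℝ :=
  ∑ k, ∑ l, (∑ i, P i k * Q i l) * (∑ j, R j l * S j k)

def mulM (X Y : Fin n → Fin n → ℝ) (k l : Fin n) : ℝ := ∑ i, X k i * Y i l

lemma sum4_eq_prod (F : Fin n → Fin n → Fin n → Fin n → ℝ) :
    (∑ i, ∑ j, ∑ k, ∑ l, F i j k l)
      = ∑ x : Fin n × Fin n × Fin n × Fin n, F x.1 x.2.1 x.2.2.1 x.2.2.2 := by
  simp only [Fintype.sum_prod_type]

lemma sum3_eq_prod (F : Fin n → Fin n → Fin n → ℝ) :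
    (∑ i, ∑ j, ∑ k, F i j k) = ∑ x : Fin n × Fin n × Fin n, F x.1 x.2.1 x.2.2 := by
  simp only [Fintype.sum_prod_type]

lemma sum2_eq_prod (F : Fin n → Fin n → ℝ) :
    (∑ i, ∑ j, F i j) = ∑ x : Fin n × Fin n, F x.1 x.2 := by
  simp only [Fintype.sum_prod_type]

lemma reorder_klij (F : Fin n → Fin n → Fin n → Fin n → ℝ) :
    (∑ i, ∑ j, ∑ k, ∑ l, F i j k l) = ∑ k, ∑ l, ∑ i, ∑ j, F i j k l := by
  rw [sum4_eq_prod, sum4_eq_prod]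
  exact Fintype.sum_equiv
    ⟨fun x => (x.2.2.1, x.2.2.2, x.1, x.2.1), fun x => (x.2.2.1, x.2.2.2, x.1, x.2.1),
      fun x => rfl, fun x => rfl⟩ _ _ (fun x => rfl)

lemma P1 (f g : Fin n → Fin n → ℝ) :
    (∑ i, ∑ j, ∑ k, ∑ l, f i k * g j l) = (∑ i, ∑ k, f i k) * (∑ j, ∑ l, g j l) := by
  rw [Finset.sum_mul_sum]
  exact sum_congr rfl fun i _ => sum_congr rfl fun j _ => (Finset.sum_mul_sum _ _ _ _).symm

lemma P1s (f g : Fin n → Fin n → ℝ) :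
    (∑ i, ∑ j, ∑ k, ∑ l, f i l * g j k) = (∑ i, ∑ l, f i l) * (∑ j, ∑ k, g j k) := by
  calc (∑ i, ∑ j, ∑ k, ∑ l, f i l * g j k)
      = ∑ i, ∑ j, ∑ k, ∑ l, f i k * g j l := by
        refine sum_congr rfl fun i _ => sum_congr rfl fun j _ => Finset.sum_comm.trans ?_
        exact sum_congr rfl fun k _ => sum_congr rfl fun l _ => by ring
    _ = _ := P1 f g

lemma P2 (f g : Fin n → Fin n → Fin n → ℝ) :
    (∑ i, ∑ j, ∑ k, ∑ l, f i k l * g j k l) = ∑ k, ∑ l, (∑ i, f i k l) * (∑ j, g j k l) := by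
  rw [reorder_klij]
  refine sum_congr rfl fun k _ => sum_congr rfl fun l _ => ?_
  rw [Finset.sum_mul_sum]

lemma P2s (f g : Fin n → Fin n → Fin n → ℝ) :
    (∑ i, ∑ j, ∑ k, ∑ l, f i l k * g j l k) = ∑ k, ∑ l, (∑ i, f i k l) * (∑ j, g j k l) := by
  calc (∑ i, ∑ j, ∑ k, ∑ l, f i l k * g j l k)
      = ∑ k, ∑ l, (∑ i, f i l k) * (∑ j, g j l k) :=
        P2 (fun i k l => f i l k) (fun j k l => g j l k)
    _ = _ := Finset.sum_comm

lemma tr4_swap (P Q R S : Fin n → Fin n → ℝ) : tr4 P Q R S = tr4 R S P Q := by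
  unfold tr4
  rw [Finset.sum_comm]
  exact sum_congr rfl fun k _ => sum_congr rfl fun l _ => mul_comm _ _

lemma KN_ip (B C D E : Fin n → Fin n → ℝ) :
    (∑ i, ∑ j, ∑ k, ∑ l, KN B C i j k l * KN D E i j k l)
      = 4 * (ip B D * ip C E) + 4 * (ip B E * ip C D)
        - 4 * tr4 B D C E - 4 * tr4 B E C D := by
  have e1 : (∑ i, ∑ j, ∑ k, ∑ l, (B i k * D i k) * (C j l * E j l)) = ip B D * ip C E :=
    P1 _ _
  have e2 : (∑ i, ∑ j, ∑ k, ∑ l, (B i k * D i l) * (C j l * E j k)) = tr4 B D C E :=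
    P2 _ _
  have e3 : (∑ i, ∑ j, ∑ k, ∑ l, (B i k * E i k) * (C j l * D j l)) = ip B E * ip C D :=
    P1 _ _
  have e4 : (∑ i, ∑ j, ∑ k, ∑ l, (B i k * E i l) * (C j l * D j k)) = tr4 B E C D :=
    P2 _ _
  have e5 : (∑ i, ∑ j, ∑ k, ∑ l, (B i l * D i k) * (C j k * E j l)) = tr4 B D C E :=
    P2s (fun i k l => B i k * D i l) (fun j k l => C j l * E j k)
  have e6 : (∑ i, ∑ j, ∑ k, ∑ l, (B i l * D i l) * (C j k * E j k)) = ip B D * ip C E :=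
    P1s _ _
  have e7 : (∑ i, ∑ j, ∑ k, ∑ l, (B i l * E i k) * (C j k * D j l)) = tr4 B E C D :=
    P2s (fun i k l => B i k * E i l) (fun j k l => C j l * D j k)
  have e8 : (∑ i, ∑ j, ∑ k, ∑ l, (B i l * E i l) * (C j k * D j k)) = ip B E * ip C D :=
    P1s _ _
  have e9 : (∑ i, ∑ j, ∑ k, ∑ l, (C i k * D i k) * (B j l * E j l)) = ip C D * ip B E :=
    P1 _ _
  have e10 : (∑ i, ∑ j, ∑ k, ∑ l, (C i k * D i l) * (B j l * E j k)) = tr4 B E C D :=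
    (P2 _ _).trans (tr4_swap C D B E)
  have e11 : (∑ i, ∑ j, ∑ k, ∑ l, (C i k * E i k) * (B j l * D j l)) = ip C E * ip B D :=
    P1 _ _
  have e12 : (∑ i, ∑ j, ∑ k, ∑ l, (C i k * E i l) * (B j l * D j k)) = tr4 B D C E :=
    (P2 _ _).trans (tr4_swap C E B D)
  have e13 : (∑ i, ∑ j, ∑ k, ∑ l, (C i l * D i k) * (B j k * E j l)) = tr4 B E C D :=
    (P2s (fun i k l => C i k * D i l) (fun j k l => B j l * E j k)).trans (tr4_swap C D B E)
  have e14 : (∑ i, ∑ j, ∑ k, ∑ l, (C i l * D i l) * (B j k * E j k)) = ip C D * ip B E :=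
    P1s _ _
  have e15 : (∑ i, ∑ j, ∑ k, ∑ l, (C i l * E i k) * (B j k * D j l)) = tr4 B D C E :=
    (P2s (fun i k l => C i k * E i l) (fun j k l => B j l * D j k)).trans (tr4_swap C E B D)
  have e16 : (∑ i, ∑ j, ∑ k, ∑ l, (C i l * E i l) * (B j k * D j k)) = ip C E * ip B D :=
    P1s _ _
  have split : (∑ i, ∑ j, ∑ k, ∑ l, KN B C i j k l * KN D E i j k l)
      = ((∑ i, ∑ j, ∑ k, ∑ l, (B i k * D i k) * (C j l * E j l))
        - (∑ i, ∑ j, ∑ k, ∑ l, (B i k * D i l) * (C j l * E j k))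
        + (∑ i, ∑ j, ∑ k, ∑ l, (B i k * E i k) * (C j l * D j l))
        - (∑ i, ∑ j, ∑ k, ∑ l, (B i k * E i l) * (C j l * D j k))
        - (∑ i, ∑ j, ∑ k, ∑ l, (B i l * D i k) * (C j k * E j l))
        + (∑ i, ∑ j, ∑ k, ∑ l, (B i l * D i l) * (C j k * E j k))
        - (∑ i, ∑ j, ∑ k, ∑ l, (B i l * E i k) * (C j k * D j l))
        + (∑ i, ∑ j, ∑ k, ∑ l, (B i l * E i l) * (C j k * D j k))
        + (∑ i, ∑ j, ∑ k, ∑ l, (C i k * D i k) * (B j l * E j l))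
        - (∑ i, ∑ j, ∑ k, ∑ l, (C i k * D i l) * (B j l * E j k))
        + (∑ i, ∑ j, ∑ k, ∑ l, (C i k * E i k) * (B j l * D j l))
        - (∑ i, ∑ j, ∑ k, ∑ l, (C i k * E i l) * (B j l * D j k))
        - (∑ i, ∑ j, ∑ k, ∑ l, (C i l * D i k) * (B j k * E j l))
        + (∑ i, ∑ j, ∑ k, ∑ l, (C i l * D i l) * (B j k * E j k))
        - (∑ i, ∑ j, ∑ k, ∑ l, (C i l * E i k) * (B j k * D j l))
        + (∑ i, ∑ j, ∑ k, ∑ l, (C i l * E i l) * (B j k * D j k))) := by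
    simp only [← Finset.sum_add_distrib, ← Finset.sum_sub_distrib]
    refine sum_congr rfl fun i _ => sum_congr rfl fun j _ =>
      sum_congr rfl fun k _ => sum_congr rfl fun l _ => ?_
    simp only [KN]; ring
  rw [split, e1, e2, e3, e4, e5, e6, e7, e8, e9, e10, e11, e12, e13, e14, e15, e16]
  ring

lemma gsym : ∀ i j : Fin n, gmat n i j = gmat n j i := by
  intro i j; simp only [gmat]; by_cases h : i = j <;> simp [h, Ne.symm, eq_comm]

lemma mulM_gr (X : Fin n → Fin n → ℝ) (k l : Fin n) : mulM X (gmat n) k l = X k l := by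
  simp [mulM, gmat]

lemma mulM_gl (X : Fin n → Fin n → ℝ) (k l : Fin n) : mulM (gmat n) X k l = X k l := by
  simp [mulM, gmat]

lemma sum_g_right (X : Fin n → Fin n → ℝ) :
    (∑ k, ∑ l, X k l * gmat n l k) = ∑ k, X k k := by
  refine sum_congr rfl fun k _ => ?_
  simp [gmat, eq_comm, mul_ite]

lemma ip_comm (X Y : Fin n → Fin n → ℝ) : ip X Y = ip Y X := by
  unfold ip
  exact sum_congr rfl fun i _ => sum_congr rfl fun j _ => mul_comm _ _

lemma ip_g (X : Fin n → Fin n → ℝ) : ip X (gmat n) = ∑ i, X i i := by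
  unfold ip
  refine sum_congr rfl fun i _ => ?_
  simp [gmat, mul_ite]

lemma ip_gg : ip (gmat n) (gmat n) = (n : ℝ) := by
  rw [ip_g]; simp [gmat]

lemma tr4_mul (X Y Z V : Fin n → Fin n → ℝ)
    (hX : ∀ i j, X i j = X j i) (hZ : ∀ i j, Z i j = Z j i) :
    tr4 X Y Z V = ∑ k, ∑ l, mulM X Y k l * mulM Z V l k := by
  unfold tr4 mulM
  refine sum_congr rfl fun k _ => sum_congr rfl fun l _ => ?_
  congr 1
  · exact sum_congr rfl fun i _ => by rw [hX]
  · exact sum_congr rfl fun j _ => by rw [hZ]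

section Ainst
variable (A : Fin n → Fin n → ℝ)

lemma ABsym (hA : ∀ i j, A i j = A j i) : ∀ k l, mulM A A k l = mulM A A l k := by
  intro k l
  unfold mulM
  exact sum_congr rfl fun i _ => by rw [hA k i, hA i l]; ring

lemma t1 (hA : ∀ i j, A i j = A j i) : tr4 A A (gmat n) A = ip (mulM A A) A := by
  rw [tr4_mul A A (gmat n) A hA gsym]
  unfold ip
  refine sum_congr rfl fun k _ => sum_congr rfl fun l _ => ?_
  rw [mulM_gl, hA l k]

lemma t2 (hA : ∀ i j, A i j = A j i) : tr4 A A A A = ip (mulM A A) (mulM A A) := by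
  rw [tr4_mul A A A A hA hA]
  unfold ip
  refine sum_congr rfl fun k _ => sum_congr rfl fun l _ => ?_
  rw [ABsym A hA l k]

lemma t5 (hA : ∀ i j, A i j = A j i) : tr4 A (gmat n) A (gmat n) = ip A A := by
  rw [tr4_mul A (gmat n) A (gmat n) hA hA]
  unfold ip
  refine sum_congr rfl fun k _ => sum_congr rfl fun l _ => ?_
  rw [mulM_gr, mulM_gr, hA l k]

lemma t3 (hA : ∀ i j, A i j = A j i) :
    tr4 A (mulM A A) A (gmat n) = ip (mulM A A) (mulM A A) := by
  rw [tr4_mul A (mulM A A) A (gmat n) hA hA]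
  have step1 : (∑ k, ∑ l, mulM A (mulM A A) k l * mulM A (gmat n) l k)
      = ∑ k, ∑ l, ∑ i, A k i * mulM A A i l * A l k := by
    refine sum_congr rfl fun k _ => sum_congr rfl fun l _ => ?_
    rw [mulM_gr]
    show mulM A (mulM A A) k l * A l k = _
    rw [mulM, Finset.sum_mul]
  have step2 : (∑ k, ∑ l, ∑ i, A k i * mulM A A i l * A l k)
      = ∑ k, ∑ l, ∑ i, mulM A A k l * (A k i * A i l) := by
    rw [sum3_eq_prod, sum3_eq_prod]
    refine Fintype.sum_equiv ⟨fun x => (x.2.2, x.2.1, x.1), fun x => (x.2.2, x.2.1, x.1),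
      fun x => rfl, fun x => rfl⟩ _ _ fun x => ?_
    simp only [Equiv.coe_fn_mk]
    rw [hA x.1 x.2.2, hA x.2.1 x.1]
    ring
  have step3 : (∑ k, ∑ l, ∑ i, mulM A A k l * (A k i * A i l))
      = ip (mulM A A) (mulM A A) := by
    unfold ip
    refine sum_congr rfl fun k _ => sum_congr rfl fun l _ => ?_
    rw [← Finset.mul_sum]
    rfl
  rw [step1, step2, step3]

lemma t4 (hA : ∀ i j, A i j = A j i) :
    tr4 A (gmat n) A (mulM A A) = ip (mulM A A) (mulM A A) := by
  rw [tr4_mul A (gmat n) A (mulM A A) hA hA]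
  have step1 : (∑ k, ∑ l, mulM A (gmat n) k l * mulM A (mulM A A) l k)
      = ∑ k, ∑ l, ∑ i, A k l * (A l i * mulM A A i k) := by
    refine sum_congr rfl fun k _ => sum_congr rfl fun l _ => ?_
    rw [mulM_gr]
    show A k l * mulM A (mulM A A) l k = _
    rw [mulM, Finset.mul_sum]
  have step2 : (∑ k, ∑ l, ∑ i, A k l * (A l i * mulM A A i k))
      = ∑ k, ∑ l, ∑ i, mulM A A k l * (A k i * A i l) := by
    rw [sum3_eq_prod, sum3_eq_prod]
    refine Fintype.sum_equiv ⟨fun x => (x.2.2, x.1, x.2.1), fun x => (x.2.1, x.2.2, x.1),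
      fun x => rfl, fun x => rfl⟩ _ _ fun x => ?_
    simp only [Equiv.coe_fn_mk]
    rw [hA x.1 x.2.1, hA x.2.1 x.2.2]
    ring
  have step3 : (∑ k, ∑ l, ∑ i, mulM A A k l * (A k i * A i l))
      = ip (mulM A A) (mulM A A) := by
    unfold ip
    refine sum_congr rfl fun k _ => sum_congr rfl fun l _ => ?_
    rw [← Finset.mul_sum]
    rfl
  rw [step1, step2, step3]

lemma trAB (hA : ∀ i j, A i j = A j i) : (∑ k, mulM A A k k) = ip A A := by
  unfold ip mulM
  refine sum_congr rfl fun k _ => sum_congr rfl fun i _ => by rw [hA i k]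

lemma t6 (hA : ∀ i j, A i j = A j i) : tr4 (mulM A A) (mulM A A) (gmat n) (gmat n)
    = ip (mulM A A) (mulM A A) := by
  rw [tr4_mul _ _ _ _ (ABsym A hA) gsym]
  have : (∑ k, ∑ l, mulM (mulM A A) (mulM A A) k l * mulM (gmat n) (gmat n) l k)
      = ∑ k, ∑ l, mulM (mulM A A) (mulM A A) k l * gmat n l k := by
    refine sum_congr rfl fun k _ => sum_congr rfl fun l _ => by rw [mulM_gl]
  rw [this, sum_g_right]
  unfold ip
  refine sum_congr rfl fun k _ => ?_
  show mulM (mulM A A) (mulM A A) k k = _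
  rw [mulM]
  exact sum_congr rfl fun i _ => by rw [ABsym A hA i k]

lemma t7 (hA : ∀ i j, A i j = A j i) : tr4 (mulM A A) (gmat n) (gmat n) (mulM A A)
    = ip (mulM A A) (mulM A A) := by
  rw [tr4_mul _ _ _ _ (ABsym A hA) gsym]
  unfold ip
  refine sum_congr rfl fun k _ => sum_congr rfl fun l _ => ?_
  rw [mulM_gr, mulM_gl, ABsym A hA l k]

lemma t8 (hA : ∀ i j, A i j = A j i) : tr4 (mulM A A) (gmat n) (gmat n) (gmat n) = ip A A := by
  rw [tr4_mul _ _ _ _ (ABsym A hA) gsym]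
  have : (∑ k, ∑ l, mulM (mulM A A) (gmat n) k l * mulM (gmat n) (gmat n) l k)
      = ∑ k, ∑ l, mulM A A k l * gmat n l k := by
    refine sum_congr rfl fun k _ => sum_congr rfl fun l _ => by rw [mulM_gr, mulM_gl]
  rw [this, sum_g_right, trAB A hA]

lemma t9 : tr4 (gmat n) (gmat n) (gmat n) (gmat n) = (n : ℝ) := by
  rw [tr4_mul _ _ _ _ gsym gsym]
  have : (∑ k, ∑ l, mulM (gmat n) (gmat n) k l * mulM (gmat n) (gmat n) l k)
      = ∑ k, ∑ l, gmat n k l * gmat n l k := by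
    refine sum_congr rfl fun k _ => sum_congr rfl fun l _ => by rw [mulM_gr, mulM_gl]
  rw [this, sum_g_right]
  simp [gmat]

end Ainst

lemma W_KN_g (W : Fin n → Fin n → Fin n → Fin n → ℝ)
    (hW1 : ∀ i j k l, W i j k l = - W j i k l)
    (hW2 : ∀ i j k l, W i j k l = - W i j l k)
    (hTraceFree : ∀ j l, ∑ i, W i j i l = 0)
    (C : Fin n → Fin n → ℝ) :
    (∑ i, ∑ j, ∑ k, ∑ l, W i j k l * KN C (gmat n) i j k l) = 0 := by
  have hTa : ∀ i k, (∑ j, W i j k j) = 0 := by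
    intro i k
    have e : ∀ j, W i j k j = W j i j k := fun j => by
      rw [hW1 i j k j, hW2 j i k j]; ring
    simp_rw [e]
    exact hTraceFree i k
  have hTb : ∀ i l, (∑ j, W i j j l) = 0 := by
    intro i l
    have e : ∀ j, W i j j l = - W j i j l := fun j => hW1 i j j l
    simp_rw [e, Finset.sum_neg_distrib, hTraceFree i l, neg_zero]
  have hTd : ∀ j k, (∑ i, W i j k i) = 0 := by
    intro j k
    have e : ∀ i, W i j k i = - W i j i k := fun i => hW2 i j k i
    simp_rw [e, Finset.sum_neg_distrib, hTraceFree j k, neg_zero]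
  have Sa : (∑ i, ∑ j, ∑ k, ∑ l, W i j k l * (C i k * gmat n j l)) = 0 := by
    have col : ∀ i j k, (∑ l, W i j k l * (C i k * gmat n j l)) = W i j k j * C i k := by
      intro i j k
      simp [gmat, mul_ite, mul_zero, mul_one]
    simp_rw [col]
    refine Finset.sum_eq_zero fun i _ => ?_
    rw [Finset.sum_comm]
    refine Finset.sum_eq_zero fun k _ => ?_
    rw [← Finset.sum_mul, hTa i k, zero_mul]
  have Sb : (∑ i, ∑ j, ∑ k, ∑ l, W i j k l * (C i l * gmat n j k)) = 0 := by
    have col : ∀ i j l, (∑ k, W i j k l * (C i l * gmat n j k)) = W i j j l * C i l := by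
      intro i j l
      simp [gmat, mul_ite, mul_zero, mul_one]
    have swap : ∀ i j, (∑ k, ∑ l, W i j k l * (C i l * gmat n j k))
        = ∑ l, W i j j l * C i l := by
      intro i j
      rw [Finset.sum_comm]
      exact Finset.sum_congr rfl fun l _ => col i j l
    simp_rw [swap]
    refine Finset.sum_eq_zero fun i _ => ?_
    rw [Finset.sum_comm]
    refine Finset.sum_eq_zero fun l _ => ?_
    rw [← Finset.sum_mul, hTb i l, zero_mul]
  have Sc : (∑ i, ∑ j, ∑ k, ∑ l, W i j k l * (C j l * gmat n i k)) = 0 := by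
    have swap : ∀ i j, (∑ k, ∑ l, W i j k l * (C j l * gmat n i k))
        = ∑ l, W i j i l * C j l := by
      intro i j
      rw [Finset.sum_comm]
      refine Finset.sum_congr rfl fun l _ => ?_
      simp [gmat, mul_ite, mul_zero, mul_one]
    simp_rw [swap]
    rw [Finset.sum_comm]
    refine Finset.sum_eq_zero fun j _ => ?_
    rw [Finset.sum_comm]
    refine Finset.sum_eq_zero fun l _ => ?_
    rw [← Finset.sum_mul, hTraceFree j l, zero_mul]
  have Sd : (∑ i, ∑ j, ∑ k, ∑ l, W i j k l * (C j k * gmat n i l)) = 0 := by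
    have col : ∀ i j k, (∑ l, W i j k l * (C j k * gmat n i l)) = W i j k i * C j k := by
      intro i j k
      simp [gmat, mul_ite, mul_zero, mul_one]
    simp_rw [col]
    rw [Finset.sum_comm]
    refine Finset.sum_eq_zero fun j _ => ?_
    rw [Finset.sum_comm]
    refine Finset.sum_eq_zero fun k _ => ?_
    rw [← Finset.sum_mul, hTd j k, zero_mul]
  have split : (∑ i, ∑ j, ∑ k, ∑ l, W i j k l * KN C (gmat n) i j k l)
      = (∑ i, ∑ j, ∑ k, ∑ l, W i j k l * (C i k * gmat n j l))
        - (∑ i, ∑ j, ∑ k, ∑ l, W i j k l * (C i l * gmat n j k))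
        + (∑ i, ∑ j, ∑ k, ∑ l, W i j k l * (C j l * gmat n i k))
        - (∑ i, ∑ j, ∑ k, ∑ l, W i j k l * (C j k * gmat n i l)) := by
    simp only [← Finset.sum_add_distrib, ← Finset.sum_sub_distrib]
    refine sum_congr rfl fun i _ => sum_congr rfl fun j _ =>
      sum_congr rfl fun k _ => sum_congr rfl fun l _ => ?_
    simp only [KN]; ring
  rw [split, Sa, Sb, Sc, Sd]; ring

end Stmt9
set_option maxHeartbeats 2000000 in
open Stmt9 in
/-- Cauchy–Schwarz estimate in the proof of Lemma 2.6. -/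
theorem stmt_9 (n : ℕ) (hn : 4 ≤ n)
    (W : Fin n → Fin n → Fin n → Fin n → ℝ)
    (hW1 : ∀ i j k l, W i j k l = - W j i k l)
    (hW2 : ∀ i j k l, W i j k l = - W i j l k)
    (hW3 : ∀ i j k l, W i j k l = W k l i j)
    (hBianchi : ∀ i j k l, W i j k l + W i k l j + W i l j k = 0)
    (hTraceFree : ∀ j l, ∑ i, W i j i l = 0)
    (A : Fin n → Fin n → ℝ)
    (hAsymm : ∀ i j, A i j = A j i)
    (hAtr : ∑ i, A i i = 0) :
    (∑ i, ∑ j, ∑ k, ∑ l,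
        (W i j k l + ((n : ℝ) / (2 * ((n : ℝ) - 2))) * KN A (gmat n) i j k l)
          * KN A A i j k l) ^ 2
    ≤ (8 * ((n : ℝ) - 2) / ((n : ℝ) - 1)) * (∑ i, ∑ j, (A i j) ^ 2) ^ 2
        * ((∑ i, ∑ j, ∑ k, ∑ l, (W i j k l) ^ 2)
            + (2 * (n : ℝ) / ((n : ℝ) - 2)) * ∑ i, ∑ j, (A i j) ^ 2) := by
  set N : ℝ := (n : ℝ) with hNdef
  have hN4 : (4:ℝ) ≤ N := by rw [hNdef]; exact_mod_cast hn
  have hN0 : (0:ℝ) < N := by linarith only [hN4]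
  have hN1 : (0:ℝ) < N - 1 := by linarith only [hN4]
  have hN2 : (0:ℝ) < N - 2 := by linarith only [hN4]
  have hN1' : N - 1 ≠ 0 := ne_of_gt hN1
  have hN2' : N - 2 ≠ 0 := ne_of_gt hN2
  have hN0' : N ≠ 0 := ne_of_gt hN0
  set a : ℝ := ∑ i, ∑ j, (A i j)^2 with ha_def
  have ha0 : 0 ≤ a := by
    rw [ha_def]
    exact Finset.sum_nonneg fun _ _ => Finset.sum_nonneg fun _ _ => sq_nonneg _
  have hipA : ip A A = a := by
    rw [ha_def]; unfold ip
    exact Finset.sum_congr rfl fun i _ => Finset.sum_congr rfl fun j _ => (pow_two _).symm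
  set q : ℝ := ip (mulM A A) (mulM A A) with hq_def
  set p : ℝ := ip (mulM A A) A with hp_def
  have hq0 : 0 ≤ q := by
    rw [hq_def]; unfold ip
    exact Finset.sum_nonneg fun _ _ => Finset.sum_nonneg fun _ _ => mul_self_nonneg _
  set w : ℝ := ∑ i, ∑ j, ∑ k, ∑ l, (W i j k l)^2 with hw_def
  have hw0 : 0 ≤ w := by
    rw [hw_def]
    exact Finset.sum_nonneg fun _ _ => Finset.sum_nonneg fun _ _ =>
      Finset.sum_nonneg fun _ _ => Finset.sum_nonneg fun _ _ => sq_nonneg _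
  -- trace values
  have hiAg : ip A (gmat n) = 0 := by rw [ip_g]; exact hAtr
  have hgA : ip (gmat n) A = 0 := (ip_comm _ _).trans hiAg
  have hiABg : ip (mulM A A) (gmat n) = a := by rw [ip_g, trAB A hAsymm, hipA]
  have hgAB : ip (gmat n) (mulM A A) = a := (ip_comm _ _).trans hiABg
  have higg : ip (gmat n) (gmat n) = N := by rw [ip_gg, hNdef]
  have hiAAB : ip A (mulM A A) = p := (ip_comm _ _).trans hp_def.symm
  -- values of KN pairings
  have v1 : (∑ i, ∑ j, ∑ k, ∑ l, KN A A i j k l * KN A A i j k l) = 8*a^2 - 8*q := by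
    rw [KN_ip, t2 A hAsymm, hipA, ← hq_def]; ring
  have v2 : (∑ i, ∑ j, ∑ k, ∑ l, KN A A i j k l * KN (mulM A A) (gmat n) i j k l)
      = -(8*q) := by
    rw [KN_ip, t3 A hAsymm, t4 A hAsymm, hiAg, hiAAB, ← hq_def]; ring
  have v3 : (∑ i, ∑ j, ∑ k, ∑ l, KN A A i j k l * KN (gmat n) (gmat n) i j k l)
      = -(8*a) := by
    rw [KN_ip, t5 A hAsymm, hiAg, hipA]; ring
  have v4 : (∑ i, ∑ j, ∑ k, ∑ l, KN (mulM A A) (gmat n) i j k l * KN (mulM A A) (gmat n) i j k l)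
      = 4*N*q + 4*a^2 - 8*q := by
    rw [KN_ip, t6 A hAsymm, t7 A hAsymm, higg, hiABg, hgAB, ← hq_def]; ring
  have v5 : (∑ i, ∑ j, ∑ k, ∑ l, KN (mulM A A) (gmat n) i j k l * KN (gmat n) (gmat n) i j k l)
      = 8*a*N - 8*a := by
    rw [KN_ip, t8 A hAsymm, higg, hiABg, hipA]; ring
  have v6 : (∑ i, ∑ j, ∑ k, ∑ l, KN (gmat n) (gmat n) i j k l * KN (gmat n) (gmat n) i j k l)
      = 8*N^2 - 8*N := by
    rw [KN_ip, t9, higg, ← hNdef]; ring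
  have v7 : (∑ i, ∑ j, ∑ k, ∑ l, KN A (gmat n) i j k l * KN A A i j k l) = -(8*p) := by
    rw [KN_ip, t1 A hAsymm, hgA, hipA, ← hp_def]; ring
  -- the modified tensor
  set c : ℝ := N / (2 * (N - 2)) with hc_def
  set α : ℝ := 2/(N-2) with hα_def
  set β : ℝ := a/((N-2)*(N-1)) with hβ_def
  set Sp : Fin n → Fin n → Fin n → Fin n → ℝ := fun i j k l =>
    KN A A i j k l + α * KN (mulM A A) (gmat n) i j k l
      - β * KN (gmat n) (gmat n) i j k l with hSp_def
  set m : ℝ := ∑ i, ∑ j, ∑ k, ∑ l, (Sp i j k l)^2 with hm_def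
  have hm0 : 0 ≤ m := by
    rw [hm_def]
    exact Finset.sum_nonneg fun _ _ => Finset.sum_nonneg fun _ _ =>
      Finset.sum_nonneg fun _ _ => Finset.sum_nonneg fun _ _ => sq_nonneg _
  set X : ℝ := ∑ i, ∑ j, ∑ k, ∑ l, W i j k l * Sp i j k l with hX_def
  clear_value X N a q p w c α β Sp m
  -- expansion of m
  have mexp : m = (∑ i, ∑ j, ∑ k, ∑ l, KN A A i j k l * KN A A i j k l)
      + α^2 * (∑ i, ∑ j, ∑ k, ∑ l, KN (mulM A A) (gmat n) i j k l * KN (mulM A A) (gmat n) i j k l)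
      + β^2 * (∑ i, ∑ j, ∑ k, ∑ l, KN (gmat n) (gmat n) i j k l * KN (gmat n) (gmat n) i j k l)
      + 2*α * (∑ i, ∑ j, ∑ k, ∑ l, KN A A i j k l * KN (mulM A A) (gmat n) i j k l)
      - 2*β * (∑ i, ∑ j, ∑ k, ∑ l, KN A A i j k l * KN (gmat n) (gmat n) i j k l)
      - 2*(α*β) * (∑ i, ∑ j, ∑ k, ∑ l, KN (mulM A A) (gmat n) i j k l * KN (gmat n) (gmat n) i j k l) := by
    rw [hm_def]
    simp only [Finset.mul_sum, ← Finset.sum_add_distrib, ← Finset.sum_sub_distrib]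
    refine Finset.sum_congr rfl fun i _ => Finset.sum_congr rfl fun j _ =>
      Finset.sum_congr rfl fun k _ => Finset.sum_congr rfl fun l _ => ?_
    simp only [hSp_def]
    ring
  have hmval : m = 8*(N-2)/(N-1)*a^2 + 8*a^2/(N-2) - 8*N*q/(N-2) := by
    rw [mexp, v1, v2, v3, v4, v5, v6, hα_def, hβ_def]
    field_simp
    ring
  -- X equals the pairing with the Weyl tensor alone
  have vX : X = ∑ i, ∑ j, ∑ k, ∑ l, W i j k l * KN A A i j k l := by
    have e0 : X = (∑ i, ∑ j, ∑ k, ∑ l, W i j k l * KN A A i j k l)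
        + α * (∑ i, ∑ j, ∑ k, ∑ l, W i j k l * KN (mulM A A) (gmat n) i j k l)
        - β * (∑ i, ∑ j, ∑ k, ∑ l, W i j k l * KN (gmat n) (gmat n) i j k l) := by
      rw [hX_def]
      simp only [Finset.mul_sum, ← Finset.sum_add_distrib, ← Finset.sum_sub_distrib]
      refine Finset.sum_congr rfl fun i _ => Finset.sum_congr rfl fun j _ =>
        Finset.sum_congr rfl fun k _ => Finset.sum_congr rfl fun l _ => ?_
      simp only [hSp_def]
      ring
    rw [e0, W_KN_g W hW1 hW2 hTraceFree (mulM A A), W_KN_g W hW1 hW2 hTraceFree (gmat n)]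
    ring
  -- Cauchy–Schwarz
  have CS : X^2 ≤ w * m := by
    rw [hX_def, hw_def, hm_def, sum4_eq_prod, sum4_eq_prod, sum4_eq_prod]
    exact Finset.sum_mul_sq_le_sq_mul_sq _ _ _
  -- split the target sum
  have hLsplit : (∑ i, ∑ j, ∑ k, ∑ l,
      (W i j k l + c * KN A (gmat n) i j k l) * KN A A i j k l)
      = (∑ i, ∑ j, ∑ k, ∑ l, W i j k l * KN A A i j k l)
        + c * (∑ i, ∑ j, ∑ k, ∑ l, KN A (gmat n) i j k l * KN A A i j k l) := by
    simp only [Finset.mul_sum, ← Finset.sum_add_distrib]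
    refine Finset.sum_congr rfl fun i _ => Finset.sum_congr rfl fun j _ =>
      Finset.sum_congr rfl fun k _ => Finset.sum_congr rfl fun l _ => ?_
    ring
  rw [hLsplit, ← vX, v7]
  -- Cauchy–Schwarz on p : p^2 ≤ q * a
  have hppq : p^2 ≤ q * a := by
    have e1 : p = ∑ x : Fin n × Fin n, mulM A A x.1 x.2 * A x.1 x.2 := by
      rw [hp_def]; unfold ip; exact sum2_eq_prod _
    have e2 : q = ∑ x : Fin n × Fin n, (mulM A A x.1 x.2)^2 := by
      rw [hq_def]; unfold ip
      rw [sum2_eq_prod (fun i j => mulM A A i j * mulM A A i j)]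
      exact Fintype.sum_congr _ _ fun x => (pow_two _).symm
    have e3 : a = ∑ x : Fin n × Fin n, (A x.1 x.2)^2 := by
      rw [ha_def]; exact sum2_eq_prod _
    rw [e1, e2, e3]
    exact Finset.sum_mul_sq_le_sq_mul_sq _ _ _
  -- positivity of the auxiliary matrix square
  have hMM' : 0 ≤ N*a^2*q - N*a*p^2 - a^4 := by
    set Mm : Fin n → Fin n → ℝ := fun k l =>
      a * mulM A A k l - p * A k l - (a^2/N) * gmat n k l with hMm_def
    have h0 : 0 ≤ ∑ k, ∑ l, (Mm k l)^2 :=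
      Finset.sum_nonneg fun _ _ => Finset.sum_nonneg fun _ _ => sq_nonneg _
    have hexp : (∑ k, ∑ l, (Mm k l)^2)
        = a^2 * ip (mulM A A) (mulM A A) + p^2 * ip A A + (a^2/N)^2 * ip (gmat n) (gmat n)
          - 2*(a*p) * ip (mulM A A) A - 2*(a*(a^2/N)) * ip (mulM A A) (gmat n)
          + 2*(p*(a^2/N)) * ip A (gmat n) := by
      unfold ip
      simp only [Finset.mul_sum, ← Finset.sum_add_distrib, ← Finset.sum_sub_distrib]
      refine Finset.sum_congr rfl fun k _ => Finset.sum_congr rfl fun l _ => ?_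
      simp only [hMm_def]
      ring
    rw [hexp, ← hq_def, hipA, higg, ← hp_def, hiABg, hiAg] at h0
    have hgoal : a^2*q + p^2*a + (a^2/N)^2*N - 2*(a*p)*p - 2*(a*(a^2/N))*a + 2*(p*(a^2/N))*0
        = (N*a^2*q - N*a*p^2 - a^4)/N := by field_simp; ring
    rw [hgoal] at h0
    have := (div_nonneg_iff.mp h0)
    rcases this with ⟨h,_⟩ | ⟨h,h'⟩
    · exact h
    · linarith only [h', hN0]
  -- final scalar estimate
  rcases eq_or_lt_of_le ha0 with ha | ha
  · -- a = 0
    have hp2 : p^2 ≤ 0 := by rw [← ha] at hppq; simpa using hppq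
    have hp0 : p = 0 := by
      have := le_antisymm hp2 (sq_nonneg p)
      exact pow_eq_zero_iff (Nat.succ_ne_zero 1) |>.mp this
    have hm8 : m = -(8*N*q/(N-2)) := by rw [hmval, ← ha]; ring
    have hmle : m ≤ 0 := by
      rw [hm8]
      have : 0 ≤ 8*N*q/(N-2) := by positivity
      linarith only [this]
    have hX2 : X^2 ≤ 0 := by nlinarith only [CS, hw0, hm0, hmle]
    rw [← ha, hp0]
    nlinarith only [hX2]
  · -- a > 0
    set K' : ℝ := 2*N/(N-2)*a with hK'_def
    set K : ℝ := 8*N*p^2/((N-2)*a) with hK_def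
    clear_value K K'
    have hK0 : 0 ≤ K := by
      rw [hK_def]
      exact div_nonneg (by positivity) (le_of_lt (mul_pos hN2 ha))
    have hK'0 : 0 ≤ K' := by
      rw [hK'_def]
      have : 0 ≤ 2*N/(N-2) := by positivity
      exact mul_nonneg this (le_of_lt ha)
    have hKK' : K*K' = (c*(8*p))^2 := by
      rw [hK_def, hK'_def, hc_def]
      field_simp
      ring
    have key : a^3 + N*p^2 ≤ N*a*q := by nlinarith only [hMM', ha]
    have hmK : m + K ≤ 8*(N-2)/(N-1)*a^2 := by
      have e : m + K - 8*(N-2)/(N-1)*a^2 = (a^3 + N*p^2 - N*a*q)*(8/((N-2)*a)) := by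
        rw [hmval, hK_def]
        field_simp
        ring
      have hpos : (0:ℝ) ≤ 8/((N-2)*a) := le_of_lt (div_pos (by norm_num) (mul_pos hN2 ha))
      have h2 : (a^3 + N*p^2 - N*a*q)*(8/((N-2)*a)) ≤ 0 :=
        mul_nonpos_of_nonpos_of_nonneg (by linarith only [key]) hpos
      linarith only [e, h2]
    have habs : (2*(X*(c*(8*p))))^2 ≤ (w*K + m*K')^2 := by
      nlinarith only [CS, hKK', sq_nonneg X, mul_nonneg hK0 hK'0, sq_nonneg (w*K - m*K'),
        mul_nonneg hw0 hm0]
    have hS0 : 0 ≤ w*K + m*K' := add_nonneg (mul_nonneg hw0 hK0) (mul_nonneg hm0 hK'0)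
    have h2Xd : -(w*K + m*K') ≤ 2*(X*(c*(8*p))) := by
      nlinarith only [habs, hS0, sq_nonneg (2*(X*(c*(8*p))) + (w*K + m*K'))]
    have hfin : (X + c * -(8*p))^2 ≤ (w + K')*(m + K) := by nlinarith only [CS, h2Xd, hKK']
    calc (X + c * -(8*p))^2 ≤ (w + K')*(m + K) := hfin
      _ ≤ (w + K')*(8*(N-2)/(N-1)*a^2) :=
          mul_le_mul_of_nonneg_left hmK (add_nonneg hw0 hK'0)
      _ = 8*(N-2)/(N-1)*a^2*(w + K') := by ring
end

section
/- Cubic trace bound for trace-free symmetric matrices (used in the proofs of Lemma 2.4 and Lemma 2.6): Let n ≥ 2 and let A be a real symmetric n×n matrix with trace zero. Then tr(A³) ≤ ((n−2)/√(n(n−1)))·(tr(A²))^{3/2}, where tr(A²) = Σ_{i,j} A_{ij}² and tr(A³) = Σ_{i,j,k} A_{ij}A_{jk}A_{ki}. -/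
/-!
Diagonalising `A`, both traces become power sums of the eigenvalues `λᵢ`, which sum to zero.
With `s = ∑ λᵢ²` and `p = √(s / (n (n - 1)))`, Cauchy–Schwarz applied to `λᵢ = -∑_{j ≠ i} λⱼ`
gives `λᵢ ≤ (n - 1) p`, so `(λᵢ + p)² (λᵢ - (n - 1) p) ≤ 0`. Summing these cubic inequalities,
the linear terms vanish and what remains is `∑ λᵢ³ ≤ (n - 2) p s`, which is the claim.
-/

open Finset Matrix

section ZeroSum

variable {ι : Type*} [Fintype ι] {a : ι → ℝ}

lemma card_mul_sq_le_of_sum_eq_zero (h0 : ∑ i, a i = 0) (i : ι) :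
    Fintype.card ι * a i ^ 2 ≤ (Fintype.card ι - 1) * ∑ j, a j ^ 2 := by
  classical
  have hsum : ∑ j ∈ univ.erase i, a j = -a i := by
    linarith [add_sum_erase univ a (mem_univ i)]
  have hsq : ∑ j ∈ univ.erase i, a j ^ 2 = ∑ j, a j ^ 2 - a i ^ 2 := by
    linarith [add_sum_erase univ (fun j => a j ^ 2) (mem_univ i)]
  have hcs := sq_sum_le_card_mul_sum_sq (s := univ.erase i) (f := a)
  rw [hsum, hsq, card_erase_of_mem (mem_univ i), card_univ,
    Nat.cast_pred (Fintype.card_pos_iff.2 ⟨i⟩)] at hcs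
  linarith

/-- Each term satisfies `(a + p)² (a - (n - 1) p) ≤ 0`; equality throughout holds when one entry
is `(n - 1) p` and the others are `-p`. -/
lemma sum_pow_three_le_of_forall_le (h0 : ∑ i, a i = 0) {p : ℝ}
    (hp : ∀ i, a i ≤ (Fintype.card ι - 1) * p) :
    ∑ i, a i ^ 3 ≤ (Fintype.card ι - 3) * p * ∑ i, a i ^ 2
      + Fintype.card ι * (Fintype.card ι - 1) * p ^ 3 := by
  set n : ℝ := (Fintype.card ι : ℝ)
  calc ∑ i, a i ^ 3
      ≤ ∑ i, ((n - 3) * p * a i ^ 2 + (2 * n - 3) * p ^ 2 * a i + (n - 1) * p ^ 3) :=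
        sum_le_sum fun i _ => by
          nlinarith [mul_nonpos_of_nonneg_of_nonpos (sq_nonneg (a i + p)) (sub_nonpos.2 (hp i))]
    _ = (n - 3) * p * ∑ i, a i ^ 2 + n * (n - 1) * p ^ 3 := by
        simp only [sum_add_distrib, ← mul_sum, h0, sum_const, card_univ, nsmul_eq_mul]
        ring

theorem sum_pow_three_le_of_sum_eq_zero (hn : 2 ≤ Fintype.card ι) (h0 : ∑ i, a i = 0) :
    ∑ i, a i ^ 3 ≤ ((Fintype.card ι - 2) / √(Fintype.card ι * (Fintype.card ι - 1)))
      * (∑ i, a i ^ 2) ^ (3 / 2 : ℝ) := by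
  have hsq_le := card_mul_sq_le_of_sum_eq_zero h0
  replace hn : (2 : ℝ) ≤ Fintype.card ι := by exact_mod_cast hn
  set n : ℝ := (Fintype.card ι : ℝ)
  set s := ∑ i, a i ^ 2
  have hs : 0 ≤ s := sum_nonneg fun i _ => sq_nonneg (a i)
  set q := √(n * (n - 1))
  have hq : 0 < q := Real.sqrt_pos.2 (by nlinarith)
  have hq2 : q ^ 2 = n * (n - 1) := Real.sq_sqrt (by nlinarith)
  set r := √s
  have hr : 0 ≤ r := Real.sqrt_nonneg s
  have hr2 : r ^ 2 = s := Real.sq_sqrt hs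
  set p := r / q
  have hp : 0 ≤ p := div_nonneg hr hq.le
  have hp2 : n * (n - 1) * p ^ 2 = s := by
    rw [div_pow, hq2, hr2]
    field_simp [show n - 1 ≠ 0 by linarith]
  have hmax : ∀ i, a i ≤ (n - 1) * p := fun i => by
    refine (abs_le_of_sq_le_sq' ?_ (mul_nonneg (by linarith) hp)).2
    nlinarith [hsq_le i]
  calc ∑ i, a i ^ 3 ≤ (n - 3) * p * s + n * (n - 1) * p ^ 3 :=
        sum_pow_three_le_of_forall_le h0 hmax
    _ = (n - 2) / q * r ^ 3 := by
        rw [show n * (n - 1) * p ^ 3 = p * s by rw [← hp2]; ring, ← hr2]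
        ring
    _ = (n - 2) / q * s ^ (3 / 2 : ℝ) := by
        rw [Real.rpow_div_two_eq_sqrt _ hs]; norm_cast

end ZeroSum

theorem Matrix.IsHermitian.trace_pow_eq_sum_eigenvalues_pow {𝕜 n : Type*} [RCLike 𝕜] [Fintype n]
    [DecidableEq n] {A : Matrix n n 𝕜} (hA : A.IsHermitian) (k : ℕ) :
    (A ^ k).trace = ∑ i, (hA.eigenvalues i : 𝕜) ^ k := by
  conv_lhs => rw [hA.spectral_theorem]
  rw [← map_pow, Unitary.conjStarAlgAut_apply, trace_mul_cycle,
    Unitary.coe_star_mul_self, one_mul, diagonal_pow, trace_diagonal]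
  rfl

theorem Matrix.IsHermitian.trace_pow_three_le {n : Type*} [Fintype n] [DecidableEq n]
    {A : Matrix n n ℝ}
    (hA : A.IsHermitian) (hA0 : A.trace = 0) (hn : 2 ≤ Fintype.card n) :
    (A ^ 3).trace ≤ ((Fintype.card n - 2) / √(Fintype.card n * (Fintype.card n - 1)))
      * (A ^ 2).trace ^ (3 / 2 : ℝ) := by
  have h0 : ∑ i, hA.eigenvalues i = 0 := by
    simpa using hA.trace_eq_sum_eigenvalues.symm.trans hA0
  simp only [hA.trace_pow_eq_sum_eigenvalues_pow, RCLike.ofReal_real_eq_id, id]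
  exact sum_pow_three_le_of_sum_eq_zero hn h0

/-- Cubic trace bound for trace-free symmetric matrices:
tr(A³) ≤ ((n−2)/√(n(n−1)))·(tr A²)^{3/2}. -/
theorem stmt_11 (n : ℕ) (hn : 2 ≤ n)
    (A : Fin n → Fin n → ℝ)
    (hAsymm : ∀ i j, A i j = A j i)
    (hAtr : ∑ i, A i i = 0) :
    ∑ i, ∑ j, ∑ k, A i j * A j k * A k i
    ≤ (((n : ℝ) - 2) / Real.sqrt ((n : ℝ) * ((n : ℝ) - 1)))
        * (∑ i, ∑ j, (A i j) ^ 2) ^ ((3 : ℝ) / 2) := by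
  have hB : (Matrix.of A).IsHermitian :=
    isHermitian_iff_isSymm.2 (IsSymm.ext fun i j => hAsymm j i)
  have hcube : ∑ i, ∑ j, ∑ k, A i j * A j k * A k i = (Matrix.of A ^ 3).trace := by
    simp only [pow_succ, pow_zero, one_mul, trace, diag_apply, mul_apply, of_apply, sum_mul]
    exact sum_congr rfl fun i _ => sum_comm
  have hsq : ∑ i, ∑ j, A i j ^ 2 = (Matrix.of A ^ 2).trace := by
    simp only [sq, trace, diag_apply, mul_apply, of_apply]
    exact sum_congr rfl fun i _ => sum_congr rfl fun j _ => by rw [hAsymm j i]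
  rw [hcube, hsq]
  simpa only [Fintype.card_fin] using hB.trace_pow_three_le hAtr (by rwa [Fintype.card_fin])
end
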